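/- Let (Ω, S) be a {1,k}-valenced association scheme, and let x, y, z ∈ S_k and r ∈ x*z, s ∈ z*y form an initial configuration (x ∼ z ∼ y). If z is a loop of the graph 𝔛 (i.e., z ∼ z) and (xx*·yy*) ∩ zz* = {1}, then r and s are linked with respect to (x,y,z). -/

import Mathlib

open Finset

abbrev BRel (Ω : Type*) := Finset (Ω × Ω)

variable {Ω : Type*} [Fintype Ω] [DecidableEq Ω]

/-- The diagonal relation `1_Ω`. -/
def diagRel (Ω : Type*) [Fintype Ω] [DecidableEq Ω] : BRel Ω :=
  Finset.univ.filter (fun p => p.1 = p.2)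

/-- The converse relation `r*`. -/
def convRel (r : BRel Ω) : BRel Ω := r.image Prod.swap

/-- Relational composition `a ∘ b`. -/
def compBRel (a b : BRel Ω) : BRel Ω :=
  Finset.univ.filter (fun p => ∃ γ, (p.1, γ) ∈ a ∧ (γ, p.2) ∈ b)

/-- An association scheme on a finite set `Ω`: a partition `S` of `Ω × Ω` into nonempty
basis relations, containing the diagonal, closed under converse, with well-defined
intersection numbers `c r s t`. -/
structure AssocScheme (Ω : Type*) [Fintype Ω] [DecidableEq Ω] where
  S : Finset (BRel Ω)
  nonempty : ∀ s ∈ S, s.Nonempty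
  partition : ∀ p : Ω × Ω, ∃! s, s ∈ S ∧ p ∈ s
  diag_mem : diagRel Ω ∈ S
  conv_mem : ∀ s ∈ S, convRel s ∈ S
  c : BRel Ω → BRel Ω → BRel Ω → ℕ
  c_spec : ∀ r ∈ S, ∀ s ∈ S, ∀ t ∈ S, ∀ p ∈ t,
    (Finset.univ.filter (fun γ => (p.1, γ) ∈ r ∧ (γ, p.2) ∈ s)).card = c r s t

namespace AssocScheme

variable (X : AssocScheme Ω)

/-- The valency `n_s = c_{s,s*}^{1}`. -/
def n (s : BRel Ω) : ℕ := X.c s (convRel s) (diagRel Ω)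

/-- The complex product `rs` of two basis relations: all `t ∈ S` with `c_{r,s}^t ≠ 0`. -/
def cp (r s : BRel Ω) : Finset (BRel Ω) := X.S.filter (fun t => X.c r s t ≠ 0)

/-- The complex product of two sets of basis relations. -/
def cpS (A B : Finset (BRel Ω)) : Finset (BRel Ω) :=
  A.biUnion fun a => B.biUnion fun b => X.cp a b

/-- `S_k`: the basis relations of valency `k`. -/
def Sk (k : ℕ) : Finset (BRel Ω) := X.S.filter (fun s => X.n s = k)

/-- `x ∼ y`: every `s` in the complex product `x*y` satisfies `c_{x,s}^y = 1`. -/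
def adj (x y : BRel Ω) : Prop := ∀ s ∈ X.cp (convRel x) y, X.c x s y = 1

/-- `r(α,β)`: the unique basis relation containing `(α,β)`. -/
noncomputable def rel (α β : Ω) : BRel Ω := (X.partition (α, β)).choose

/-- The indistinguishing number `c(s) = Σ_t c_{t,t*}^s`. -/
def ind (s : BRel Ω) : ℕ := ∑ t ∈ X.S, X.c t (convRel t) s

/-- `k`-saturated: every at most four element subset of `S_k` has a common neighbor. -/
def kSaturated (k : ℕ) : Prop :=
  ∀ T ⊆ X.Sk k, T.card ≤ 4 → ∃ y ∈ X.Sk k, ∀ x ∈ T, X.adj y x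

/-- `r ∈ x*z` and `s ∈ z*y` are linked with respect to `(x,y,z)`, with witness `t`. -/
def linked (k : ℕ) (x y z r s t : BRel Ω) : Prop :=
  ∃ q ∈ X.Sk k, X.adj q x ∧ X.adj q y ∧ X.adj q z ∧
    ∃ u ∈ X.cp (convRel x) q, ∃ v ∈ X.cp (convRel y) q, ∃ w ∈ X.cp (convRel z) q,
      t ∈ X.cp r s ∧
      X.cp (convRel x) z ∩ X.cp u (convRel w) = {r} ∧
      X.cp (convRel z) y ∩ X.cp w (convRel v) = {s} ∧
      X.cp (convRel x) y ∩ X.cp u (convRel v) = {t}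

/-- Desarguesian with respect to `S_k`. -/
def Desarguesian (k : ℕ) : Prop :=
  ∀ x ∈ X.Sk k, ∀ y ∈ X.Sk k, ∀ z ∈ X.Sk k, X.adj x z → X.adj z y →
    ∀ r ∈ X.cp (convRel x) z, ∀ s ∈ X.cp (convRel z) y, ∃ t, X.linked k x y z r s t

end AssocScheme

/-- `αr = {β : (α,β) ∈ r}`. -/
def relImage (r : BRel Ω) (α : Ω) : Finset Ω := (r.filter (fun p => p.1 = α)).image Prod.snd

/-- The restriction `r_{x,y} = r ∩ (αx × αy)`. -/
def restrictRel (α : Ω) (r x y : BRel Ω) : BRel Ω :=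
  r.filter (fun p => p.1 ∈ relImage x α ∧ p.2 ∈ relImage y α)


/-- An algebraic isomorphism: a bijection between the sets of basis relations
preserving all intersection numbers. -/
def AlgIso {Ω Ω' : Type*} [Fintype Ω] [DecidableEq Ω] [Fintype Ω'] [DecidableEq Ω']
    (X : AssocScheme Ω) (X' : AssocScheme Ω') (φ : BRel Ω → BRel Ω') : Prop :=
  Set.BijOn φ ↑X.S ↑X'.S ∧
    ∀ r ∈ X.S, ∀ s ∈ X.S, ∀ t ∈ X.S, X.c r s t = X'.c (φ r) (φ s) (φ t)

/-- A `φ`-faithful map with domain `D`. -/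
def Faithful {Ω Ω' : Type*} [Fintype Ω] [DecidableEq Ω] [Fintype Ω'] [DecidableEq Ω']
    (X : AssocScheme Ω) (X' : AssocScheme Ω') (φ : BRel Ω → BRel Ω')
    (D : Finset Ω) (f : Ω → Ω') : Prop :=
  Set.InjOn f ↑D ∧ ∀ a ∈ D, ∀ b ∈ D, φ (X.rel a b) = X'.rel (f a) (f b)

/-- `f` is `φ`-extendable to the point `γ`. -/
def ExtendableAt {Ω Ω' : Type*} [Fintype Ω] [DecidableEq Ω] [Fintype Ω'] [DecidableEq Ω']
    (X : AssocScheme Ω) (X' : AssocScheme Ω') (φ : BRel Ω → BRel Ω')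
    (D : Finset Ω) (f : Ω → Ω') (γ : Ω) : Prop :=
  ∃ g : Ω → Ω', (∀ a ∈ D, g a = f a) ∧ Faithful X X' φ (insert γ D) g

/-
Take `q = z`, `u = r`, `v = s*`, `w = 1`; everything then reduces to
`|x*y ∩ rs| = 1`. Fix `p` and count the `x`-predecessors `e` of `p`: since `c_{x,r}^z = 1` and
`c_{z,s}^y = 1` (adjacency), `e` determines `a` with `e z a`, `p r a` and then `c` with `e y c`,
`a s c`, so `r(p, c) ∈ x*y ∩ rs`. Conversely, the condition `(xx*·yy*) ∩ zz* = {1}` glues the two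
apexes built from the two sides of any `(p, c)` with `r(p, c) ∈ x*y ∩ rs`, so every such `c` arises.
Hence the valencies of `x*y ∩ rs` sum to at most `k`; two distinct members would both be thin,
and a thin `t ∈ x*y ∩ rs` pins down `c` as the common endpoint of all these configurations.
-/

section

variable {α : Type*} [DecidableEq α]

@[simp]
lemma mem_convRel {r : BRel α} {a b : α} : (a, b) ∈ convRel r ↔ (b, a) ∈ r := by
  simp [convRel]

@[simp]
lemma convRel_convRel (r : BRel α) : convRel (convRel r) = r := by
  ext ⟨a, b⟩; simp

lemma card_convRel (r : BRel α) : #(convRel r) = #r :=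
  card_image_of_injective r Prod.swap_injective

@[simp]
lemma mem_relImage {r : BRel α} {a b : α} : b ∈ relImage r a ↔ (a, b) ∈ r := by
  simp [relImage]

end

@[simp]
lemma mem_diagRel {a b : Ω} : (a, b) ∈ diagRel Ω ↔ a = b := by
  simp [diagRel]

lemma convRel_diagRel : convRel (diagRel Ω) = diagRel Ω := by
  ext ⟨a, b⟩; simp [eq_comm]

namespace AssocScheme

variable (X : AssocScheme Ω)

lemma eq_of_mem_of_mem {t t' : BRel Ω} (ht : t ∈ X.S) (ht' : t' ∈ X.S) {p : Ω × Ω}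
    (h : p ∈ t) (h' : p ∈ t') : t = t' :=
  (X.partition p).unique ⟨ht, h⟩ ⟨ht', h'⟩

lemma rel_mem (α β : Ω) : X.rel α β ∈ X.S := (X.partition (α, β)).choose_spec.1.1

lemma mem_rel (α β : Ω) : (α, β) ∈ X.rel α β := (X.partition (α, β)).choose_spec.1.2

lemma card_mid {r s t : BRel Ω} (hr : r ∈ X.S) (hs : s ∈ X.S) (ht : t ∈ X.S) {α β : Ω}
    (h : (α, β) ∈ t) : #{γ | (α, γ) ∈ r ∧ (γ, β) ∈ s} = X.c r s t :=
  X.c_spec r hr s hs t ht (α, β) h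

lemma exists_mid_of_c_ne_zero {r s t : BRel Ω} (hr : r ∈ X.S) (hs : s ∈ X.S) (ht : t ∈ X.S)
    {α β : Ω} (h : (α, β) ∈ t) (hc : X.c r s t ≠ 0) : ∃ γ, (α, γ) ∈ r ∧ (γ, β) ∈ s := by
  rw [← X.card_mid hr hs ht h, ← pos_iff_ne_zero, card_pos] at hc
  obtain ⟨γ, hγ⟩ := hc
  exact ⟨γ, by simpa using hγ⟩

lemma mid_unique_of_c_eq_one {r s t : BRel Ω} (hr : r ∈ X.S) (hs : s ∈ X.S) (ht : t ∈ X.S)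
    {α β : Ω} (h : (α, β) ∈ t) (hc : X.c r s t = 1) {γ γ' : Ω}
    (hγ : (α, γ) ∈ r ∧ (γ, β) ∈ s) (hγ' : (α, γ') ∈ r ∧ (γ', β) ∈ s) : γ = γ' := by
  rw [← X.card_mid hr hs ht h] at hc
  exact card_le_one.mp hc.le _ (by simpa using hγ) _ (by simpa using hγ')

lemma mem_cp_of_mid {r s t : BRel Ω} (hr : r ∈ X.S) (hs : s ∈ X.S) (ht : t ∈ X.S)
    {α β γ : Ω} (h : (α, β) ∈ t) (hαγ : (α, γ) ∈ r) (hγβ : (γ, β) ∈ s) : t ∈ X.cp r s := by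
  refine mem_filter.mpr ⟨ht, ?_⟩
  rw [← X.card_mid hr hs ht h, ← pos_iff_ne_zero, card_pos]
  exact ⟨γ, by simp [hαγ, hγβ]⟩

lemma card_relImage {t : BRel Ω} (ht : t ∈ X.S) (α : Ω) : #(relImage t α) = X.n t := by
  rw [n, ← X.card_mid ht (X.conv_mem t ht) X.diag_mem (mem_diagRel.mpr (rfl : α = α))]
  congr 1
  ext γ
  simp

lemma n_pos {t : BRel Ω} (ht : t ∈ X.S) : 0 < X.n t := by
  obtain ⟨⟨α, β⟩, h⟩ := X.nonempty t ht
  rw [← X.card_relImage ht α, card_pos]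
  exact ⟨β, by simpa using h⟩

lemma exists_mem_of_fst {t : BRel Ω} (ht : t ∈ X.S) (α : Ω) : ∃ β, (α, β) ∈ t := by
  obtain ⟨β, h⟩ := card_pos.mp ((X.card_relImage ht α).symm ▸ X.n_pos ht)
  exact ⟨β, by simpa using h⟩

lemma card_eq_card_mul_n {t : BRel Ω} (ht : t ∈ X.S) : #t = Fintype.card Ω * X.n t := by
  rw [card_eq_sum_card_fiberwise (f := Prod.fst) (t := univ) fun _ _ => mem_coe.mpr (mem_univ _),
    ← card_univ, ← smul_eq_mul, ← sum_const]
  refine sum_congr rfl fun α _ => ?_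
  rw [← X.card_relImage ht α, relImage]
  refine (card_image_of_injOn ?_).symm
  rintro ⟨a, b⟩ hab ⟨a', b'⟩ hab' (rfl : b = b')
  simp_all

lemma n_convRel {t : BRel Ω} (ht : t ∈ X.S) : X.n (convRel t) = X.n t := by
  have hΩ : 0 < Fintype.card Ω := by
    obtain ⟨p, -⟩ := X.nonempty _ X.diag_mem
    exact Fintype.card_pos_iff.mpr ⟨p.1⟩
  have h := X.card_eq_card_mul_n (X.conv_mem t ht)
  rw [card_convRel, X.card_eq_card_mul_n ht] at h
  exact (Nat.eq_of_mul_eq_mul_left hΩ h).symm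

lemma mem_S_of_mem_cp {r s t : BRel Ω} (ht : t ∈ X.cp r s) : t ∈ X.S :=
  (mem_filter.mp ht).1

lemma exists_mid_of_mem_cp {r s t : BRel Ω} (hr : r ∈ X.S) (hs : s ∈ X.S) (ht : t ∈ X.cp r s)
    {α β : Ω} (h : (α, β) ∈ t) : ∃ γ, (α, γ) ∈ r ∧ (γ, β) ∈ s :=
  X.exists_mid_of_c_ne_zero hr hs (X.mem_S_of_mem_cp ht) h (mem_filter.mp ht).2

lemma c_mul_n {r s t : BRel Ω} (hr : r ∈ X.S) (hs : s ∈ X.S) (ht : t ∈ X.S) :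
    X.c r s t * X.n t = X.c t (convRel s) r * X.n r := by
  obtain ⟨⟨α, -⟩, -⟩ := X.nonempty r hr
  have hr' : ∀ γ ∈ relImage r α,
      #((relImage t α).bipartiteAbove (fun γ β => (γ, β) ∈ s) γ) = X.c t (convRel s) r := by
    intro γ hγ
    rw [← X.card_mid ht (X.conv_mem s hs) hr (mem_relImage.mp hγ), bipartiteAbove]
    congr 1; ext β; simp
  have ht' : ∀ β ∈ relImage t α,
      #((relImage r α).bipartiteBelow (fun γ β => (γ, β) ∈ s) β) = X.c r s t := by
    intro β hβ
    rw [← X.card_mid hr hs ht (mem_relImage.mp hβ), bipartiteBelow]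
    congr 1; ext γ; simp
  have key := sum_card_bipartiteAbove_eq_sum_card_bipartiteBelow
    (s := relImage r α) (t := relImage t α) (fun γ β => (γ, β) ∈ s)
  rw [sum_congr rfl hr', sum_congr rfl ht', sum_const, sum_const, X.card_relImage hr,
    X.card_relImage ht, smul_eq_mul, smul_eq_mul] at key
  rw [mul_comm, ← key, mul_comm]

lemma c_convRel {r s t : BRel Ω} (hr : r ∈ X.S) (hs : s ∈ X.S) (ht : t ∈ X.S) :
    X.c r s t = X.c (convRel s) (convRel r) (convRel t) := by
  obtain ⟨⟨α, β⟩, h⟩ := X.nonempty t ht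
  rw [← X.card_mid hr hs ht h, ← X.card_mid (X.conv_mem s hs) (X.conv_mem r hr)
    (X.conv_mem t ht) (mem_convRel.mpr h)]
  congr 1; ext γ; simp [and_comm]

lemma convRel_mem_cp {r s t : BRel Ω} (hr : r ∈ X.S) (hs : s ∈ X.S) (ht : t ∈ X.cp r s) :
    convRel t ∈ X.cp (convRel s) (convRel r) := by
  obtain ⟨htS, hc⟩ := mem_filter.mp ht
  exact mem_filter.mpr ⟨X.conv_mem t htS, X.c_convRel hr hs htS ▸ hc⟩

lemma c_eq_one_of_c_eq_one {r s t : BRel Ω} (hr : r ∈ X.S) (hs : s ∈ X.S) (ht : t ∈ X.S)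
    (hn : X.n r = X.n t) (hc : X.c r s t = 1) : X.c t (convRel s) r = 1 := by
  have h := X.c_mul_n hr hs ht
  rw [hc, one_mul, hn] at h
  exact (Nat.eq_of_mul_eq_mul_right (X.n_pos ht) (by rw [one_mul]; exact h)).symm

lemma adj_symm {x z : BRel Ω} (hx : x ∈ X.S) (hz : z ∈ X.S) (hn : X.n x = X.n z)
    (h : X.adj x z) : X.adj z x := by
  intro u hu
  have hu' := X.convRel_mem_cp (X.conv_mem z hz) hx hu
  rw [convRel_convRel] at hu'
  simpa using X.c_eq_one_of_c_eq_one hx (X.mem_S_of_mem_cp hu') hz hn (h _ hu')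

lemma diagRel_mem_cp_convRel {z : BRel Ω} (hz : z ∈ X.S) : diagRel Ω ∈ X.cp (convRel z) z := by
  obtain ⟨⟨α, β⟩, h⟩ := X.nonempty z hz
  exact X.mem_cp_of_mid (X.conv_mem z hz) hz X.diag_mem (mem_diagRel.mpr rfl)
    (mem_convRel.mpr h) h

lemma cp_diagRel_right {r : BRel Ω} (hr : r ∈ X.S) : X.cp r (diagRel Ω) = {r} := by
  refine eq_singleton_iff_unique_mem.mpr ⟨?_, fun t ht => ?_⟩
  · obtain ⟨⟨α, β⟩, h⟩ := X.nonempty r hr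
    exact X.mem_cp_of_mid hr X.diag_mem hr h h (mem_diagRel.mpr rfl)
  · obtain ⟨⟨α, β⟩, h⟩ := X.nonempty t (X.mem_S_of_mem_cp ht)
    obtain ⟨γ, hαγ, hγβ⟩ := X.exists_mid_of_mem_cp hr X.diag_mem ht h
    rw [mem_diagRel.mp hγβ] at hαγ
    exact X.eq_of_mem_of_mem (X.mem_S_of_mem_cp ht) hr h hαγ

lemma cp_diagRel_left {s : BRel Ω} (hs : s ∈ X.S) : X.cp (diagRel Ω) s = {s} := by
  refine eq_singleton_iff_unique_mem.mpr ⟨?_, fun t ht => ?_⟩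
  · obtain ⟨⟨α, β⟩, h⟩ := X.nonempty s hs
    exact X.mem_cp_of_mid X.diag_mem hs hs h (mem_diagRel.mpr rfl) h
  · obtain ⟨⟨α, β⟩, h⟩ := X.nonempty t (X.mem_S_of_mem_cp ht)
    obtain ⟨γ, hαγ, hγβ⟩ := X.exists_mid_of_mem_cp X.diag_mem hs ht h
    rw [← mem_diagRel.mp hαγ] at hγβ
    exact X.eq_of_mem_of_mem (X.mem_S_of_mem_cp ht) hs h hγβ

/-- A thin `t ∈ rs` has `c_{r,s}^t = n_r`, by `c_{r,s}^t n_t = c_{t,s*}^r n_r`. -/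
lemma mem_of_n_eq_one {r s t : BRel Ω} (hr : r ∈ X.S) (hs : s ∈ X.S) (ht : t ∈ X.cp r s)
    (hn : X.n t = 1) {α β γ : Ω} (hαβ : (α, β) ∈ t) (hαγ : (α, γ) ∈ r) : (γ, β) ∈ s := by
  obtain ⟨htS, hc⟩ := mem_filter.mp ht
  have hsub : ({γ | (α, γ) ∈ r ∧ (γ, β) ∈ s} : Finset Ω) ⊆ relImage r α := fun γ hγ => by
    simp_all
  have hle : X.n r ≤ X.c r s t := by
    have h := X.c_mul_n hr hs htS
    rw [hn, mul_one] at h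
    rw [h]
    exact Nat.le_mul_of_pos_left _ (Nat.pos_of_ne_zero fun h0 => hc (by simpa [h0] using h))
  have heq := eq_of_subset_of_card_le hsub
    (by rwa [X.card_relImage hr, X.card_mid hr hs htS hαβ])
  have hγ : γ ∈ relImage r α := mem_relImage.mpr hαγ
  rw [← heq] at hγ
  exact (mem_filter.mp hγ).2.2

lemma eq_of_cpS_inter_eq_diagRel {x y z : BRel Ω} (hx : x ∈ X.S) (hy : y ∈ X.S) (hz : z ∈ X.S)
    (hcond : X.cpS (X.cp x (convRel x)) (X.cp y (convRel y)) ∩ X.cp z (convRel z) = {diagRel Ω})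
    {e e₁ e₂ p c a : Ω} (hep : (e, p) ∈ x) (hec : (e, c) ∈ y) (he₁p : (e₁, p) ∈ x)
    (he₂c : (e₂, c) ∈ y) (he₁a : (e₁, a) ∈ z) (he₂a : (e₂, a) ∈ z) : e₁ = e₂ := by
  have hxx : X.rel e₁ e ∈ X.cp x (convRel x) := X.mem_cp_of_mid hx (X.conv_mem x hx)
    (X.rel_mem e₁ e) (X.mem_rel e₁ e) he₁p (mem_convRel.mpr hep)
  have hyy : X.rel e e₂ ∈ X.cp y (convRel y) := X.mem_cp_of_mid hy (X.conv_mem y hy)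
    (X.rel_mem e e₂) (X.mem_rel e e₂) hec (mem_convRel.mpr he₂c)
  have hzz : X.rel e₁ e₂ ∈ X.cp z (convRel z) := X.mem_cp_of_mid hz (X.conv_mem z hz)
    (X.rel_mem e₁ e₂) (X.mem_rel e₁ e₂) he₁a (mem_convRel.mpr he₂a)
  have hxxyy : X.rel e₁ e₂ ∈ X.cpS (X.cp x (convRel x)) (X.cp y (convRel y)) := by
    simp only [cpS, mem_biUnion]
    exact ⟨_, hxx, _, hyy, X.mem_cp_of_mid (X.rel_mem e₁ e) (X.rel_mem e e₂) (X.rel_mem e₁ e₂)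
      (X.mem_rel e₁ e₂) (X.mem_rel e₁ e) (X.mem_rel e e₂)⟩
  have hdiag : X.rel e₁ e₂ = diagRel Ω := by
    rw [← mem_singleton, ← hcond]
    exact mem_inter.mpr ⟨hxxyy, hzz⟩
  simpa [hdiag] using X.mem_rel e₁ e₂

lemma exists_apex {x y z r s : BRel Ω} (hx : x ∈ X.S) (hy : y ∈ X.S) (hz : z ∈ X.S)
    (hr : r ∈ X.cp (convRel x) z) (hs : s ∈ X.cp (convRel z) y)
    (hcond : X.cpS (X.cp x (convRel x)) (X.cp y (convRel y)) ∩ X.cp z (convRel z) = {diagRel Ω})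
    {t : BRel Ω} (ht : t ∈ X.cp (convRel x) y ∩ X.cp r s) {p c : Ω} (hpc : (p, c) ∈ t) :
    ∃ e a, (e, p) ∈ x ∧ (e, a) ∈ z ∧ (p, a) ∈ r ∧ (e, c) ∈ y ∧ (a, c) ∈ s := by
  have hxc := X.conv_mem x hx
  have hzc := X.conv_mem z hz
  obtain ⟨htxy, htrs⟩ := mem_inter.mp ht
  obtain ⟨e, hpe, hec⟩ := X.exists_mid_of_mem_cp hxc hy htxy hpc
  obtain ⟨a, hpa, hac⟩ :=
    X.exists_mid_of_mem_cp (X.mem_S_of_mem_cp hr) (X.mem_S_of_mem_cp hs) htrs hpc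
  obtain ⟨e₁, hpe₁, he₁a⟩ := X.exists_mid_of_mem_cp hxc hz hr hpa
  obtain ⟨e₂, hae₂, he₂c⟩ := X.exists_mid_of_mem_cp hzc hy hs hac
  rw [mem_convRel] at hpe hpe₁ hae₂
  obtain rfl := X.eq_of_cpS_inter_eq_diagRel hx hy hz hcond hpe hec hpe₁ he₂c he₁a hae₂
  exact ⟨e₁, a, hpe₁, he₁a, hpa, he₂c, hac⟩

/-- Counted from a fixed point `p`: each `x`-predecessor `e` of `p` determines the apex `a` and
then the endpoint `c` (the two intersection numbers equal to one), and by `exists_apex` every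
endpoint `c` with `r(p, c) ∈ x*y ∩ rs` arises this way. -/
lemma sum_n_inter_cp_le {x y z r s : BRel Ω} (hx : x ∈ X.S) (hy : y ∈ X.S) (hz : z ∈ X.S)
    (hr : r ∈ X.cp (convRel x) z) (hs : s ∈ X.cp (convRel z) y)
    (hzrx : X.c z (convRel r) x = 1) (hysz : X.c y (convRel s) z = 1)
    (hcond : X.cpS (X.cp x (convRel x)) (X.cp y (convRel y)) ∩ X.cp z (convRel z) = {diagRel Ω}) :
    ∑ t ∈ X.cp (convRel x) y ∩ X.cp r s, X.n t ≤ X.n x := by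
  obtain ⟨⟨-, p⟩, -⟩ := X.nonempty x hx
  set I := X.cp (convRel x) y ∩ X.cp r s
  have hIS : ∀ t ∈ I, t ∈ X.S := fun t ht => X.mem_S_of_mem_cp (mem_inter.mp ht).1
  have hdisj : (I : Set (BRel Ω)).PairwiseDisjoint (relImage · p) := by
    intro t ht t' ht' hne
    refine disjoint_left.mpr fun c hc hc' => hne ?_
    exact X.eq_of_mem_of_mem (hIS t ht) (hIS t' ht') (mem_relImage.mp hc) (mem_relImage.mp hc')
  have hcard : #(I.biUnion (relImage · p)) = ∑ t ∈ I, X.n t := by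
    rw [card_biUnion hdisj]
    exact sum_congr rfl fun t ht => X.card_relImage (hIS t ht) p
  rw [← hcard, ← X.n_convRel hx, ← X.card_relImage (X.conv_mem x hx) p]
  refine card_le_card_of_forall_subsingleton
    (fun c e => ∃ a, (e, a) ∈ z ∧ (p, a) ∈ r ∧ (e, c) ∈ y ∧ (a, c) ∈ s) ?_ ?_
  · intro c hc
    obtain ⟨t, ht, hpc⟩ := mem_biUnion.mp hc
    obtain ⟨e, a, hep, hea, hpa, hec, hac⟩ := X.exists_apex hx hy hz hr hs hcond ht
      (mem_relImage.mp hpc)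
    exact ⟨e, by simpa using hep, a, hea, hpa, hec, hac⟩
  · rintro e he c ⟨-, a, hea, hpa, hec, hac⟩ c' ⟨-, a', hea', hpa', hec', hac'⟩
    have hep : (e, p) ∈ x := by simpa using he
    obtain rfl : a = a' := X.mid_unique_of_c_eq_one hz (X.conv_mem r (X.mem_S_of_mem_cp hr)) hx
      hep hzrx ⟨hea, mem_convRel.mpr hpa⟩ ⟨hea', mem_convRel.mpr hpa'⟩
    exact X.mid_unique_of_c_eq_one hy (X.conv_mem s (X.mem_S_of_mem_cp hs)) hz hea hysz
      ⟨hec, mem_convRel.mpr hac⟩ ⟨hec', mem_convRel.mpr hac'⟩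

lemma eq_of_mem_inter_cp_of_n_eq_one {x y z r s : BRel Ω} (hx : x ∈ X.S) (hy : y ∈ X.S)
    (hz : z ∈ X.S) (hr : r ∈ X.S) (hs : s ∈ X.S)
    (hzrx : X.c z (convRel r) x = 1) (hysz : X.c y (convRel s) z = 1) {t t' : BRel Ω}
    (ht : t ∈ X.cp (convRel x) y ∩ X.cp r s) (ht' : t' ∈ X.cp (convRel x) y ∩ X.cp r s)
    (hn : X.n t = 1) (hn' : X.n t' = 1) : t = t' := by
  obtain ⟨htxy, htrs⟩ := mem_inter.mp ht
  obtain ⟨htxy', htrs'⟩ := mem_inter.mp ht'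
  obtain ⟨⟨p, c⟩, hpc⟩ := X.nonempty t (X.mem_S_of_mem_cp htxy)
  obtain ⟨c', hpc'⟩ := X.exists_mem_of_fst (X.mem_S_of_mem_cp htxy') p
  obtain ⟨e, hpe⟩ := X.exists_mem_of_fst (X.conv_mem x hx) p
  obtain ⟨a, hea, hap⟩ := X.exists_mid_of_c_ne_zero hz (X.conv_mem r hr) hx
    (mem_convRel.mp hpe) (by simp [hzrx])
  have hpa : (p, a) ∈ r := mem_convRel.mp hap
  have hcc' : c = c' := X.mid_unique_of_c_eq_one hy (X.conv_mem s hs) hz hea hysz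
    ⟨X.mem_of_n_eq_one (X.conv_mem x hx) hy htxy hn hpc hpe,
      mem_convRel.mpr (X.mem_of_n_eq_one hr hs htrs hn hpc hpa)⟩
    ⟨X.mem_of_n_eq_one (X.conv_mem x hx) hy htxy' hn' hpc' hpe,
      mem_convRel.mpr (X.mem_of_n_eq_one hr hs htrs' hn' hpc' hpa)⟩
  rw [← hcc'] at hpc'
  exact X.eq_of_mem_of_mem (X.mem_S_of_mem_cp htxy) (X.mem_S_of_mem_cp htxy') hpc hpc'

lemma exists_inter_cp_eq_singleton {k : ℕ} (hval : ∀ s ∈ X.S, X.n s = 1 ∨ X.n s = k)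
    {x y z r s : BRel Ω} (hx : x ∈ X.Sk k) (hy : y ∈ X.Sk k) (hz : z ∈ X.Sk k)
    (hxz : X.adj x z) (hzy : X.adj z y)
    (hr : r ∈ X.cp (convRel x) z) (hs : s ∈ X.cp (convRel z) y)
    (hcond : X.cpS (X.cp x (convRel x)) (X.cp y (convRel y)) ∩ X.cp z (convRel z) = {diagRel Ω}) :
    ∃ t ∈ X.cp r s, X.cp (convRel x) y ∩ X.cp r s = {t} := by
  obtain ⟨hxS, hnx⟩ := mem_filter.mp hx
  obtain ⟨hyS, hny⟩ := mem_filter.mp hy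
  obtain ⟨hzS, hnz⟩ := mem_filter.mp hz
  have hrS := X.mem_S_of_mem_cp hr
  have hsS := X.mem_S_of_mem_cp hs
  have hxrz : X.c x r z = 1 := hxz r hr
  have hzrx := X.c_eq_one_of_c_eq_one hxS hrS hzS (hnx.trans hnz.symm) hxrz
  have hysz := X.c_eq_one_of_c_eq_one hzS hsS hyS (hnz.trans hny.symm) (hzy s hs)
  set I := X.cp (convRel x) y ∩ X.cp r s
  obtain ⟨⟨e, a⟩, hea⟩ := X.nonempty z hzS
  obtain ⟨p, hep, hpa⟩ := X.exists_mid_of_c_ne_zero hxS hrS hzS hea (by simp [hxrz])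
  obtain ⟨c, hec, hca⟩ :=
    X.exists_mid_of_c_ne_zero hyS (X.conv_mem s hsS) hzS hea (by simp [hysz])
  have hpc : X.rel p c ∈ I := mem_inter.mpr
    ⟨X.mem_cp_of_mid (X.conv_mem x hxS) hyS (X.rel_mem p c) (X.mem_rel p c)
      (mem_convRel.mpr hep) hec,
     X.mem_cp_of_mid hrS hsS (X.rel_mem p c) (X.mem_rel p c) hpa (mem_convRel.mp hca)⟩
  refine ⟨X.rel p c, (mem_inter.mp hpc).2, eq_singleton_iff_unique_mem.mpr ⟨hpc, ?_⟩⟩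
  intro t ht
  by_contra hne
  have hsum : X.n t + X.n (X.rel p c) ≤ k := by
    rw [← sum_pair hne, ← hnx]
    exact (sum_le_sum_of_subset (insert_subset ht (singleton_subset_iff.mpr hpc))).trans
      (X.sum_n_inter_cp_le hxS hyS hzS hr hs hzrx hysz hcond)
  have hthin : ∀ u ∈ I, X.n u < k → X.n u = 1 := fun u hu hlt =>
    (hval u (X.mem_S_of_mem_cp (mem_inter.mp hu).1)).resolve_right hlt.ne
  have htS := X.mem_S_of_mem_cp (mem_inter.mp ht).1
  exact hne (X.eq_of_mem_inter_cp_of_n_eq_one hxS hyS hzS hrS hsS hzrx hysz ht hpc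
    (hthin t ht (by linarith [X.n_pos (X.rel_mem p c)]))
    (hthin _ hpc (by linarith [X.n_pos htS])))

end AssocScheme

theorem linked_of_loop_general (X : AssocScheme Ω) (k : ℕ)
    (hval : ∀ s ∈ X.S, X.n s = 1 ∨ X.n s = k)
    (x : BRel Ω) (hx : x ∈ X.Sk k) (y : BRel Ω) (hy : y ∈ X.Sk k) (z : BRel Ω) (hz : z ∈ X.Sk k)
    (hxz : X.adj x z) (hzy : X.adj z y)
    (r : BRel Ω) (hr : r ∈ X.cp (convRel x) z) (s : BRel Ω) (hs : s ∈ X.cp (convRel z) y)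
    (hloop : X.adj z z)
    (hcond : X.cpS (X.cp x (convRel x)) (X.cp y (convRel y)) ∩ X.cp z (convRel z) = {diagRel Ω}) :
    ∃ t, X.linked k x y z r s t := by
  obtain ⟨t, ht, hI⟩ := X.exists_inter_cp_eq_singleton hval hx hy hz hxz hzy hr hs hcond
  obtain ⟨hxS, hnx⟩ := mem_filter.mp hx
  obtain ⟨hzS, hnz⟩ := mem_filter.mp hz
  have hsS := X.mem_S_of_mem_cp hs
  have hv : convRel s ∈ X.cp (convRel y) z := by
    simpa using X.convRel_mem_cp (X.conv_mem z hzS) (mem_filter.mp hy).1 hs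
  refine ⟨t, z, hz, X.adj_symm hxS hzS (hnx.trans hnz.symm) hxz, hzy, hloop,
    r, hr, convRel s, hv, diagRel Ω, X.diagRel_mem_cp_convRel hzS, ht, ?_, ?_, ?_⟩
  · rw [convRel_diagRel, X.cp_diagRel_right (X.mem_S_of_mem_cp hr)]
    exact inter_singleton_of_mem hr
  · rw [convRel_convRel, X.cp_diagRel_left hsS]
    exact inter_singleton_of_mem hs
  · rwa [convRel_convRel]

theorem linked_of_loop (X : AssocScheme Ω) (k : ℕ) (hk : 1 < k)
    (hval : ∀ s ∈ X.S, X.n s = 1 ∨ X.n s = k)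
    (x : BRel Ω) (hx : x ∈ X.Sk k) (y : BRel Ω) (hy : y ∈ X.Sk k) (z : BRel Ω) (hz : z ∈ X.Sk k)
    (hxz : X.adj x z) (hzy : X.adj z y)
    (r : BRel Ω) (hr : r ∈ X.cp (convRel x) z) (s : BRel Ω) (hs : s ∈ X.cp (convRel z) y)
    (hloop : X.adj z z)
    (hcond : X.cpS (X.cp x (convRel x)) (X.cp y (convRel y)) ∩ X.cp z (convRel z) = {diagRel Ω}) :
    ∃ t, X.linked k x y z r s t :=
  linked_of_loop_general X k hval x hx y hy z hz hxz hzy r hr s hs hloop hcond
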